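/- arXiv:2305.05113 — 4 statements merged into one kernel-verified Lean document; each statement's English description precedes it below -/
import Mathlib

section
/- Reduction is compatible with paths: if there is a directed path in MG between two moves m, m' ∈ M_↓log, then there is a directed path between them in MG_↓log. -/
/-- The reduction of a graph of moves `C` to the moves satisfying `P`:
there is an edge between two `P`-moves iff some `C`-path joins them all of whose
interior vertices fail `P`. -/
def red {M : Type*} (P : M → Prop) (C : M → M → Prop) (m₁ m₂ : M) : Prop :=
  P m₁ ∧ P m₂ ∧ ∃ l : List M, List.Chain' C (m₁ :: l ++ [m₂]) ∧ ∀ x ∈ l, ¬ P x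

/-! Following a `C`-path from `m`, the last `P`-vertex passed so far is `red`-reachable from `m`
and is joined to the current vertex by a path avoiding `P` in its interior; at `m'` this last
vertex is one `red`-edge away from `m'`. -/

section

variable {M : Type*} {P : M → Prop} {C : M → M → Prop}

/-- `red P C a b` unfolds to `P a ∧ P b ∧ AvoidingPath P C a b`. -/
def AvoidingPath (P : M → Prop) (C : M → M → Prop) (a b : M) : Prop :=
  ∃ l : List M, List.IsChain C (a :: l ++ [b]) ∧ ∀ x ∈ l, ¬ P x

theorem AvoidingPath.of_rel {a b : M} (h : C a b) : AvoidingPath P C a b :=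
  ⟨[], List.isChain_pair.mpr h, by simp⟩

theorem AvoidingPath.tail {a b c : M} (hab : AvoidingPath P C a b) (hb : ¬ P b) (hbc : C b c) :
    AvoidingPath P C a c := by
  obtain ⟨l, hchain, hl⟩ := hab
  refine ⟨l ++ [b], ?_, List.forall_mem_append.mpr ⟨hl, List.forall_mem_singleton.mpr hb⟩⟩
  simpa using List.isChain_cons_append_cons_cons.mpr ⟨hchain, hbc, List.isChain_singleton c⟩

theorem exists_reflTransGen_red_avoidingPath {m x : M} (hm : P m) (h : Relation.TransGen C m x) :
    ∃ y, Relation.ReflTransGen (red P C) m y ∧ P y ∧ AvoidingPath P C y x := by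
  induction h with
  | single hmx => exact ⟨m, .refl, hm, .of_rel hmx⟩
  | @tail x z _ hxz ih =>
    obtain ⟨y, hmy, hy, hyx⟩ := ih
    by_cases hx : P x
    · exact ⟨x, hmy.tail ⟨hy, hx, hyx⟩, hx, .of_rel hxz⟩
    · exact ⟨y, hmy, hy, hyx.tail hx hxz⟩

end

theorem reduction_compatible_with_paths_general {M : Type*} (C : M → M → Prop) (P : M → Prop)
    (m m' : M) (hm : P m) (hm' : P m')
    (hpath : Relation.TransGen C m m') :
    Relation.TransGen (red P C) m m' := by
  obtain ⟨y, hmy, hy, hym'⟩ := exists_reflTransGen_red_avoidingPath hm hpath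
  exact .tail' hmy ⟨hy, hm', hym'⟩

/-- Reduction is compatible with paths: if `MG = (M, C)` is a DAG of
moves and there is a directed path in `MG` between two moves in `M_↓log` (i.e.
satisfying `P`), then there is a directed path between them in the reduction. -/
theorem reduction_compatible_with_paths {M : Type*} (C : M → M → Prop) (P : M → Prop)
    (hdag : ∀ m : M, ¬ Relation.TransGen C m m)
    (m m' : M) (hm : P m) (hm' : P m')
    (hpath : Relation.TransGen C m m') :
    Relation.TransGen (red P C) m m' :=
  reduction_compatible_with_paths_general C P m m' hm hm' hpath
end

section
/- In the process execution net of a process execution with o objects and e events, every reachable marking from the initial marking has exactly one token per object, and hence the number of reachable markings is at most (e+1)^o. -/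
section Aux

variable {X : Type*} [Fintype X] [DecidableEq X]

/-- position of the unique token of object `x` (sum of second components of filter). -/
noncomputable def tokPos (M : Multiset (X × ℕ)) (x : X) : ℕ :=
  ((M.filter fun t => t.1 = x).map Prod.snd).sum

lemma tokPos_eq {M : Multiset (X × ℕ)} {x : X} {b : X × ℕ}
    (hb : M.filter (fun t => t.1 = x) = {b}) : tokPos M x = b.2 := by
  simp [tokPos, hb]

lemma repr_lemma (M : Multiset (X × ℕ))
    (hM : ∀ x, (M.filter fun t => t.1 = x).card = 1) :
    M = Finset.univ.val.map (fun x => (x, tokPos M x)) := by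
  have hinj : Function.Injective (fun x : X => (x, tokPos M x)) := by
    intro a b hab
    exact congrArg Prod.fst hab
  ext ⟨y, j⟩
  obtain ⟨b, hb⟩ := Multiset.card_eq_one.mp (hM y)
  have hbmem : b ∈ M.filter (fun t => t.1 = y) := by rw [hb]; simp
  have hb1 : b.1 = y := (Multiset.mem_filter.mp hbmem).2
  have hpos : tokPos M y = b.2 := tokPos_eq hb
  have hcountM : M.count (y, j) = (M.filter (fun t => t.1 = y)).count (y, j) := by
    rw [Multiset.count_filter]
    simp
  by_cases hj : j = b.2
  · have hyb : (y, j) = b := by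
      cases b; simp_all
    have hL : M.count (y, j) = 1 := by
      rw [hcountM, hb, hyb]; simp
    have hR : (Finset.univ.val.map (fun x => (x, tokPos M x))).count (y, j) = 1 := by
      have : (y, j) = (fun x : X => (x, tokPos M x)) y := by simp [hpos, hj]
      rw [this, Multiset.count_map_eq_count' _ _ hinj]
      simp
    rw [hL, hR]
  · have hL : M.count (y, j) = 0 := by
      rw [hcountM, hb]
      rw [Multiset.count_singleton]
      simp only [ite_eq_right_iff]
      intro h
      exact absurd (congrArg Prod.snd h) hj
    have hR : (Finset.univ.val.map (fun x => (x, tokPos M x))).count (y, j) = 0 := by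
      rw [Multiset.count_eq_zero]
      intro hmem
      obtain ⟨a, _, ha⟩ := Multiset.mem_map.mp hmem
      have : a = y := (congrArg Prod.fst ha)
      subst this
      have : tokPos M a = j := congrArg Prod.snd ha
      rw [hpos] at this
      exact hj this.symm
    rw [hL, hR]

end Aux

/-- In the process execution net of a process execution with `o` objects
and `e` events, every marking reachable from the initial marking (one token per
object, at position 0) has exactly one token per object, and hence the number of
reachable markings is at most `(e+1)^o`. Tokens are pairs `(x, i)` of an object and
a position `i ≤ e`; each firing consumes and produces at most one token per object,
with equal per-object consumption and production. -/
theorem process_execution_net_markings {X : Type*} [Fintype X] [DecidableEq X] (e : ℕ)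
    (step : Multiset (X × ℕ) → Multiset (X × ℕ) → Prop)
    (hstep : ∀ M M', step M M' ↔ ∃ cons prod : Multiset (X × ℕ),
      cons ≤ M ∧ M' = M - cons + prod ∧
      (∀ t ∈ prod, t.2 ≤ e) ∧
      ∀ x : X, (cons.filter fun t => t.1 = x).card = (prod.filter fun t => t.1 = x).card ∧
        (cons.filter fun t => t.1 = x).card ≤ 1)
    (init : Multiset (X × ℕ))
    (hinit : init = Finset.univ.val.map fun x : X => (x, 0)) :
    (∀ M, Relation.ReflTransGen step init M →
        ∀ x : X, (M.filter fun t => t.1 = x).card = 1) ∧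
      {M | Relation.ReflTransGen step init M}.Finite ∧
      {M | Relation.ReflTransGen step init M}.ncard ≤ (e + 1) ^ Fintype.card X := by
  set P : Multiset (X × ℕ) → Prop := fun M =>
    (∀ x, (M.filter fun t => t.1 = x).card = 1) ∧ ∀ t ∈ M, t.2 ≤ e with hP
  have hPinit : P init := by
    constructor
    · intro x
      rw [hinit, Multiset.filter_map, Multiset.card_map]
      simp only [Function.comp_def]
      simp [Multiset.filter_eq']
    · intro t ht
      rw [hinit] at ht
      obtain ⟨a, _, ha⟩ := Multiset.mem_map.mp ht
      simp [← ha]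
  have hPstep : ∀ M M', P M → step M M' → P M' := by
    intro M M' hPM hs
    obtain ⟨cons, prod, hle, hM', hprod, hbal⟩ := (hstep M M').mp hs
    constructor
    · intro x
      subst hM'
      rw [Multiset.filter_add, Multiset.filter_sub, Multiset.card_add]
      have hle' : cons.filter (fun t => t.1 = x) ≤ M.filter (fun t => t.1 = x) :=
        Multiset.filter_le_filter _ hle
      rw [Multiset.card_sub hle']
      have h1 := (hPM.1 x)
      have h2 := (hbal x).1
      have h3 := (hbal x).2
      omega
    · intro t ht
      subst hM'
      rcases Multiset.mem_add.mp ht with h | h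
      · exact hPM.2 t (Multiset.mem_of_le (Multiset.sub_le_self _ _) h)
      · exact hprod t h
  have hreach : ∀ M, Relation.ReflTransGen step init M → P M := by
    intro M h
    induction h with
    | refl => exact hPinit
    | tail _ hs ih => exact hPstep _ _ ih hs
  set s : Set (Multiset (X × ℕ)) := {M | Relation.ReflTransGen step init M} with hs
  have hpos_le : ∀ M ∈ s, ∀ x : X, tokPos M x ≤ e + 0 := by
    intro M hM x
    obtain ⟨hM1, hM2⟩ := hreach M hM
    obtain ⟨b, hb⟩ := Multiset.card_eq_one.mp (hM1 x)
    have hbmem : b ∈ M.filter (fun t => t.1 = x) := by rw [hb]; simp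
    have : b ∈ M := (Multiset.mem_filter.mp hbmem).1
    rw [tokPos_eq hb]
    simpa using hM2 b this
  classical
  let F : s → (X → Fin (e + 1)) := fun M x =>
    ⟨tokPos M.1 x, Nat.lt_succ_of_le (by simpa using hpos_le M.1 M.2 x)⟩
  have hFinj : Function.Injective F := by
    rintro ⟨M, hM⟩ ⟨N, hN⟩ h
    have hpos : ∀ x, tokPos M x = tokPos N x := by
      intro x
      have := congrFun h x
      simpa [F] using congrArg Fin.val this
    have hMr := repr_lemma M (hreach M hM).1
    have hNr := repr_lemma N (hreach N hN).1
    have : M = N := by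
      rw [hMr, hNr]
      congr 1
      funext x
      rw [hpos]
    simpa using this
  have hfin : s.Finite := by
    have : Finite s := Finite.of_injective F hFinj
    exact Set.toFinite s
  refine ⟨fun M hM => (hreach M hM).1, hfin, ?_⟩
  have h1 : s.ncard = Nat.card s := (Nat.card_coe_set_eq s).symm
  have h2 : Nat.card s ≤ Nat.card (X → Fin (e + 1)) := by
    have : Finite s := Finite.of_injective F hFinj
    exact Nat.card_le_card_of_injective F hFinj
  have h3 : Nat.card (X → Fin (e + 1)) = (e + 1) ^ Fintype.card X := by
    rw [Nat.card_eq_fintype_card, Fintype.card_fun, Fintype.card_fin]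
  calc s.ncard = Nat.card s := h1
    _ ≤ _ := h2
    _ = _ := h3
end

section
/- The flattening of an object-centric process execution can admit alignments inconsistent with any object-centric alignment: there exists an accepting object-centric Petri net AN and a process execution P_X such that each per-object flattened trace has a perfect-fitness-optimal traditional alignment in AN's type-projected subnet, but the union of the model parts of these per-object alignments does not correspond to any single binding sequence in the language of AN. -/
open scoped Classical

/-- A (simplified) object-centric Petri net: typed places, transitions with presets,
postsets (all arcs non-variable with multiplicity one) and activity labels. -/
structure OCNet (Pl Tr Ty Act : Type) where
  pt : Pl → Ty
  pre : Tr → Finset Pl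
  post : Tr → Finset Pl
  lab : Tr → Act

namespace OCNet

variable {Pl Tr Ty Act Obj : Type}

/-- Tokens consumed by firing transition `t` under binding `b` (one object per type). -/
noncomputable def consumed (N : OCNet Pl Tr Ty Act) (t : Tr) (b : Ty → Obj) :
    Multiset (Pl × Obj) :=
  (N.pre t).val.map fun p => (p, b (N.pt p))

/-- Tokens produced by firing transition `t` under binding `b`. -/
noncomputable def produced (N : OCNet Pl Tr Ty Act) (t : Tr) (b : Ty → Obj) :
    Multiset (Pl × Obj) :=
  (N.post t).val.map fun p => (p, b (N.pt p))

/-- A binding is well typed if every place involved receives an object of its type. -/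
def WellTyped (N : OCNet Pl Tr Ty Act) (otype : Obj → Ty) (t : Tr) (b : Ty → Obj) : Prop :=
  ∀ p : Pl, (p ∈ N.pre t ∨ p ∈ N.post t) → otype (b (N.pt p)) = N.pt p

/-- `Run N otype M σ M'` : the binding sequence `σ` fires from marking `M` to `M'`. -/
inductive Run (N : OCNet Pl Tr Ty Act) (otype : Obj → Ty) :
    Multiset (Pl × Obj) → List (Tr × (Ty → Obj)) → Multiset (Pl × Obj) → Prop
  | nil (M : Multiset (Pl × Obj)) : Run N otype M [] M
  | step {M M'' : Multiset (Pl × Obj)} {t : Tr} {b : Ty → Obj} {σ : List (Tr × (Ty → Obj))}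
      (hwt : WellTyped N otype t b)
      (hen : consumed N t b ≤ M)
      (h : Run N otype (M - consumed N t b + produced N t b) σ M'') :
      Run N otype M ((t, b) :: σ) M''

/-- The objects involved in firing `t` under binding `b`. -/
noncomputable def objsOf (N : OCNet Pl Tr Ty Act) (t : Tr) (b : Ty → Obj) : Set Obj :=
  {o : Obj | ∃ p : Pl, (p ∈ N.pre t ∨ p ∈ N.post t) ∧ b (N.pt p) = o}

/-- Flattening a binding sequence to the trace of activities of object `o`. -/
noncomputable def flatten (N : OCNet Pl Tr Ty Act) (σ : List (Tr × (Ty → Obj))) (o : Obj) :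
    List Act :=
  σ.filterMap fun s => if o ∈ objsOf N s.1 s.2 then some (N.lab s.1) else none

/-- Preset of `t` in the type-projected (flattened) subnet for type `ty`. -/
noncomputable def preTy (N : OCNet Pl Tr Ty Act) (ty : Ty) (t : Tr) : Multiset Pl :=
  (N.pre t).val.filter fun p => N.pt p = ty

/-- Postset of `t` in the type-projected (flattened) subnet for type `ty`. -/
noncomputable def postTy (N : OCNet Pl Tr Ty Act) (ty : Ty) (t : Tr) : Multiset Pl :=
  (N.post t).val.filter fun p => N.pt p = ty

/-- Runs of the type-projected subnet for type `ty`: only transitions touching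
type-`ty` places fire, consuming and producing their type-`ty` pre/post places. -/
inductive FlatRun (N : OCNet Pl Tr Ty Act) (ty : Ty) :
    Multiset Pl → List Tr → Multiset Pl → Prop
  | nil (m : Multiset Pl) : FlatRun N ty m [] m
  | step {m m'' : Multiset Pl} {t : Tr} {τ : List Tr}
      (htouch : preTy N ty t ≠ 0 ∨ postTy N ty t ≠ 0)
      (hen : preTy N ty t ≤ m)
      (h : FlatRun N ty (m - preTy N ty t + postTy N ty t) τ m'') :
      FlatRun N ty m ((t) :: τ) m''

/-- Restriction of an object-centric marking to the places of type `ty`. -/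
noncomputable def restrictTy (N : OCNet Pl Tr Ty Act) (ty : Ty) (M : Multiset (Pl × Obj)) :
    Multiset Pl :=
  (M.filter fun x => N.pt x.1 = ty).map Prod.fst

end OCNet

/-!
Take two objects of different types, each sitting in its own place, and two transitions
(the two branches of an exclusive choice) that both consume both places. In the subnet
projected to the type of object `o`, transition `o` alone empties the place of `o`, so the
one-event trace `[o]` fits perfectly. In the object-centric net, however, every well-typed
binding involves both objects, so any binding sequence flattens to the same trace for both
of them and can never produce `[false]` for one and `[true]` for the other.
-/

namespace OCNet

variable {Pl Tr Ty Act Obj : Type}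

theorem mem_objsOf_of_wellTyped {N : OCNet Pl Tr Ty Act} {otype : Obj → Ty}
    (hinj : Function.Injective otype) {t : Tr} {b : Ty → Obj} (hwt : N.WellTyped otype t b)
    {p : Pl} (hp : p ∈ N.pre t ∨ p ∈ N.post t) {o : Obj} (ho : N.pt p = otype o) :
    o ∈ N.objsOf t b :=
  ⟨p, hp, hinj (by rw [hwt p hp, ho])⟩

theorem flatten_eq_map_of_run {N : OCNet Pl Tr Ty Act} {otype : Obj → Ty} {o : Obj}
    (hinvolved : ∀ t b, N.WellTyped otype t b → o ∈ N.objsOf t b)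
    {M M' : Multiset (Pl × Obj)} {σ : List (Tr × (Ty → Obj))} (hrun : N.Run otype M σ M') :
    N.flatten σ o = σ.map (N.lab ∘ Prod.fst) := by
  induction hrun with
  | nil => rfl
  | step hwt _ _ ih =>
      rw [flatten, List.filterMap_cons, if_pos (hinvolved _ _ hwt)]
      exact congrArg _ ih

theorem FlatRun.single {N : OCNet Pl Tr Ty Act} {ty : Ty} {t : Tr} (ht : N.preTy ty t ≠ 0) :
    N.FlatRun ty (N.preTy ty t) [t] (N.postTy ty t) :=
  .step (.inl ht) le_rfl (by simpa using .nil _)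

theorem restrictTy_zero (N : OCNet Pl Tr Ty Act) (ty : Ty) :
    N.restrictTy ty (0 : Multiset (Pl × Obj)) = 0 := by
  simp [restrictTy]

end OCNet

noncomputable def sharedChoiceNet : OCNet Bool Bool Bool Bool where
  pt := id
  pre _ := Finset.univ
  post _ := ∅
  lab := id

def sharedChoiceInit : Multiset (Bool × Bool) :=
  {(false, false), (true, true)}

theorem sharedChoiceNet_preTy (o : Bool) : sharedChoiceNet.preTy o o = {o} := by
  unfold OCNet.preTy
  -- the filter carries the classical decidability instance, which `rw`/`simp` will not match
  convert Multiset.filter_eq' _ o using 2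
  · rfl
  · cases o <;> rfl

theorem sharedChoiceNet_postTy (ty t : Bool) : sharedChoiceNet.postTy ty t = 0 :=
  rfl

theorem sharedChoiceNet_restrictTy_init (o : Bool) :
    sharedChoiceNet.restrictTy o sharedChoiceInit = {o} := by
  cases o <;> simp only [OCNet.restrictTy, sharedChoiceInit, Multiset.insert_eq_cons,
    Multiset.filter_cons, Multiset.filter_singleton] <;> simp [sharedChoiceNet]

theorem sharedChoiceNet_flatRun (o : Bool) :
    sharedChoiceNet.FlatRun o (sharedChoiceNet.restrictTy o sharedChoiceInit) [o]
      (sharedChoiceNet.restrictTy o (0 : Multiset (Bool × Bool))) := by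
  rw [sharedChoiceNet_restrictTy_init, OCNet.restrictTy_zero, ← sharedChoiceNet_preTy,
    ← sharedChoiceNet_postTy o o]
  exact OCNet.FlatRun.single (by simp [sharedChoiceNet_preTy])

theorem sharedChoiceNet_flatten_eq_map_of_run {M M' : Multiset (Bool × Bool)}
    {σ : List (Bool × (Bool → Bool))} (hrun : sharedChoiceNet.Run id M σ M') (o : Bool) :
    sharedChoiceNet.flatten σ o = σ.map (sharedChoiceNet.lab ∘ Prod.fst) :=
  OCNet.flatten_eq_map_of_run
    (fun _ _ hwt => OCNet.mem_objsOf_of_wellTyped Function.injective_id hwt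
      (.inl (Finset.mem_univ o)) rfl) hrun

/-- Flattening an object-centric process execution can admit alignments
inconsistent with any object-centric alignment: there exist an accepting
object-centric Petri net and per-object traces such that each flattened per-object
trace perfectly fits the type-projected subnet of its type (i.e. it is the visible
label sequence of a complete run of the flattened subnet, so a traditional alignment
of perfect fitness exists), yet no single binding sequence in the language of the
net (a run from the initial to the final marking) has exactly these per-object
traces as its flattening. -/
theorem flattening_admits_inconsistent_alignments :
    ∃ (Pl Tr Ty Act Obj : Type) (N : OCNet Pl Tr Ty Act) (otype : Obj → Ty)
      (Minit Mfinal : Multiset (Pl × Obj)) (traces : Obj → List Act),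
      (∀ o : Obj, ∃ τ : List Tr,
          OCNet.FlatRun N (otype o)
            (OCNet.restrictTy (Obj := Obj) N (otype o) Minit) τ
            (OCNet.restrictTy (Obj := Obj) N (otype o) Mfinal) ∧
          traces o = τ.map N.lab) ∧
      ¬ ∃ σ : List (Tr × (Ty → Obj)),
          OCNet.Run N otype Minit σ Mfinal ∧
          ∀ o : Obj, OCNet.flatten N σ o = traces o := by
  refine ⟨Bool, Bool, Bool, Bool, Bool, sharedChoiceNet, id, sharedChoiceInit, 0,
    fun o => [o], fun o => ⟨[o], sharedChoiceNet_flatRun o, rfl⟩, ?_⟩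
  rintro ⟨σ, hrun, htraces⟩
  have hsame : sharedChoiceNet.flatten σ false = sharedChoiceNet.flatten σ true := by
    rw [sharedChoiceNet_flatten_eq_map_of_run hrun, sharedChoiceNet_flatten_eq_map_of_run hrun]
  simp [htraces] at hsame
end

section
/- In a directed acyclic graph of moves, performing the log reduction and then the model reduction yields the subgraph induced on synchronous moves, with edges connecting synchronous moves joined by a path whose interior moves are all non-synchronous; the same subgraph results if the reductions are applied in the opposite order. -/
/-!
An edge of `red P C` is a walk of `C`-steps into non-`P` moves followed by one last `C`-step.
In this form, an edge of `red P (red Q C)` unfolds, by concatenating the underlying walks, into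
a `C`-path whose interior avoids `Q ∧ P`. Conversely such a path is cut at its interior
`Q`-moves, which must fail `P`, into edges of `red Q C`. So reducing by `Q` and then by `P` is
reducing by `Q ∧ P`, and the order does not matter.
-/

open Relation

section
variable {M : Type*} {C : M → M → Prop}

theorem exists_isChain_iff_comp_reflTransGen {S : M → Prop} {a b : M} :
    (∃ l : List M, List.IsChain C (a :: l ++ [b]) ∧ ∀ x ∈ l, S x) ↔
      Comp (ReflTransGen fun x y => C x y ∧ S y) C a b := by
  constructor
  · rintro ⟨l, hchain, hS⟩
    induction l generalizing a with
    | nil => exact ⟨a, .refl, by simpa using hchain⟩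
    | cons x l ih =>
      simp only [List.cons_append, List.isChain_cons_cons] at hchain
      obtain ⟨c, hxc, hcb⟩ := ih hchain.2 fun y hy => hS y (List.mem_cons_of_mem x hy)
      exact ⟨c, .head ⟨hchain.1, hS x List.mem_cons_self⟩ hxc, hcb⟩
  · rintro ⟨c, hac, hcb⟩
    induction hac using ReflTransGen.head_induction_on with
    | refl => exact ⟨[], by simpa using hcb, by simp⟩
    | @head a' c' hstep _ ih =>
      obtain ⟨l, hchain, hS⟩ := ih
      refine ⟨c' :: l, ?_, ?_⟩
      · simp only [List.cons_append, List.isChain_cons_cons] at hchain ⊢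
        exact ⟨hstep.1, hchain⟩
      · simpa using ⟨hstep.2, hS⟩

theorem red_iff {P : M → Prop} {a b : M} :
    red P C a b ↔ P a ∧ P b ∧ Comp (ReflTransGen fun x y => C x y ∧ ¬ P y) C a b :=
  and_congr_right' <| and_congr_right' exists_isChain_iff_comp_reflTransGen

variable {P Q : M → Prop}

theorem reflTransGen_of_reflTransGen_red {a c : M}
    (h : ReflTransGen (fun x y => red Q C x y ∧ ¬ P y) a c) :
    ReflTransGen (fun x y => C x y ∧ ¬ (Q y ∧ P y)) a c := by
  induction h with
  | refl => exact .refl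
  | @tail b c _ hstep ih =>
    obtain ⟨-, -, e, hbe, hec⟩ := red_iff.1 hstep.1
    have hbe' : ReflTransGen (fun x y => C x y ∧ ¬ (Q y ∧ P y)) b e :=
      ReflTransGen.mono (fun _ _ hxy => ⟨hxy.1, fun h => hxy.2 h.1⟩) _ _ hbe
    exact (ih.trans hbe').tail ⟨hec, fun h => hstep.2 h.2⟩

/-- The witness `e` is the last `Q`-move of the walk. -/
theorem exists_reflTransGen_red_of_reflTransGen {a c : M} (ha : Q a)
    (h : ReflTransGen (fun x y => C x y ∧ ¬ (Q y ∧ P y)) a c) :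
    ∃ e, Q e ∧ ReflTransGen (fun x y => red Q C x y ∧ ¬ P y) a e ∧
      ReflTransGen (fun x y => C x y ∧ ¬ Q y) e c := by
  induction h with
  | refl => exact ⟨a, ha, .refl, .refl⟩
  | @tail c d _ hstep ih =>
    obtain ⟨e, he, hae, hec⟩ := ih
    by_cases hd : Q d
    · have hed : red Q C e d := red_iff.2 ⟨he, hd, c, hec, hstep.1⟩
      exact ⟨d, hd, hae.tail ⟨hed, fun hP => hstep.2 ⟨hd, hP⟩⟩, .refl⟩
    · exact ⟨e, he, hae, hec.tail ⟨hstep.1, hd⟩⟩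

theorem red_red_le : red P (red Q C) ≤ red (fun m => Q m ∧ P m) C := by
  intro a b h
  obtain ⟨hPa, hPb, c, hac, hcb⟩ := red_iff.1 h
  obtain ⟨hQc, hQb, d, hcd, hdb⟩ := red_iff.1 hcb
  have hQa : Q a := by
    rcases hac.cases_head with rfl | ⟨_, hstep, -⟩
    exacts [hQc, (red_iff.1 hstep.1).1]
  have hcd' : ReflTransGen (fun x y => C x y ∧ ¬ (Q y ∧ P y)) c d :=
    ReflTransGen.mono (fun _ _ hxy => ⟨hxy.1, fun h => hxy.2 h.1⟩) _ _ hcd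
  exact red_iff.2
    ⟨⟨hQa, hPa⟩, ⟨hQb, hPb⟩, d, (reflTransGen_of_reflTransGen_red hac).trans hcd', hdb⟩

theorem le_red_red : red (fun m => Q m ∧ P m) C ≤ red P (red Q C) := by
  intro a b h
  obtain ⟨⟨hQa, hPa⟩, ⟨hQb, hPb⟩, c, hac, hcb⟩ := red_iff.1 h
  obtain ⟨e, he, hae, hec⟩ := exists_reflTransGen_red_of_reflTransGen hQa hac
  exact red_iff.2 ⟨hPa, hPb, e, hae, red_iff.2 ⟨he, hQb, c, hec, hcb⟩⟩

theorem red_red (P Q : M → Prop) (C : M → M → Prop) :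
    red P (red Q C) = red (fun m => Q m ∧ P m) C :=
  le_antisymm red_red_le le_red_red

end

theorem reductions_commute_to_sync_subgraph_general {M : Type*} (C : M → M → Prop)
    (Plog Pmod : M → Prop) :
    red Pmod (red Plog C) = red (fun m => Plog m ∧ Pmod m) C ∧
      red Plog (red Pmod C) = red (fun m => Plog m ∧ Pmod m) C := by
  refine ⟨red_red Pmod Plog C, ?_⟩
  simp_rw [red_red Plog Pmod C, and_comm]

/-- In a DAG of moves, performing the log reduction (to moves with
`Plog`) and then the model reduction (to moves with `Pmod`) yields the subgraph
induced on synchronous moves (those with both `Plog` and `Pmod`), with edges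
connecting synchronous moves joined by a `C`-path whose interior moves are all
non-synchronous; the same subgraph results in the opposite order. -/
theorem reductions_commute_to_sync_subgraph {M : Type*} (C : M → M → Prop)
    (Plog Pmod : M → Prop)
    (hdag : ∀ m : M, ¬ Relation.TransGen C m m) :
    red Pmod (red Plog C) = red (fun m => Plog m ∧ Pmod m) C ∧
      red Plog (red Pmod C) = red (fun m => Plog m ∧ Pmod m) C :=
  reductions_commute_to_sync_subgraph_general C Plog Pmod
end
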